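/- Let X be a real Banach space, {S(t)}_{t≥0} a compact C0 semigroup on X, Λ a metric space, and F:Λ×[0,∞)×X→X a continuous map satisfying conditions (F1) and (F2). Let λₙ→λ₀ in Λ and xₙ→x₀ in X, for each n≥1 let uₙ be a mild solution of u̇=−Au+F(λₙ,t,u) with uₙ(0)=xₙ, and let u₀ be a mild solution of u̇=−Au+F(λ₀,t,u) with u₀(0)=x₀ which is unique in the sense that every mild solution for the parameter λ₀ with initial value x₀ coincides with u₀. Then uₙ(t)→u₀(t) as n→∞, uniformly for t in bounded intervals of [0,∞). -/

import Mathlib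

/-!
On `[0, t₀]` the semigroup is uniformly bounded (Banach–Steinhaus), hence jointly continuous.
The growth condition (F2) and Grönwall bound all the `uₙ` uniformly; splitting
`uₙ(t) = S(t) xₙ + S(h) ∫₀^{t-h} S(t-h-s) F(λₙ, s, uₙ(s)) ds + O(h)` and using that `S(h)` is
compact, the values of all the `uₙ` on `[0, t₀]` form a relatively compact set `Q`. On the compact
set `[0, t₀] × Q`, `F(λₙ, ·, ·) → F(λ₀, ·, ·)` uniformly and (F1) makes `F(λ₀, t, ·)` Lipschitz
uniformly in `t`, so Grönwall applied to `‖uₙ - u₀‖` gives the uniform convergence.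
-/

open MeasureTheory Set Filter Topology Bornology intervalIntegral

/-- A mild solution of `u' = -Au + G(t,u)` (with `-A` generating the semigroup `S`):
a continuous map `u : [0,∞) → X` satisfying the variation of constants formula. -/
def IsMildSol {X : Type*} [NormedAddCommGroup X] [NormedSpace ℝ X] [CompleteSpace X]
    (S : ℝ → X →L[ℝ] X) (G : ℝ → X → X) (u : ℝ → X) : Prop :=
  ContinuousOn u (Set.Ici (0 : ℝ)) ∧
  ∀ t : ℝ, 0 ≤ t → u t = S t (u 0) + ∫ s in (0:ℝ)..t, S (t - s) (G s (u s))

open Real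
open scoped Pointwise

theorem add_mul_gronwallBound_zero (K A x : ℝ) :
    A + K * gronwallBound 0 K A x = A * exp (K * x) := by
  rcases eq_or_ne K 0 with rfl | hK
  · simp [gronwallBound_K0]
  · rw [gronwallBound_of_K_ne_0 hK]
    field_simp
    ring

theorem le_mul_exp_of_le_add_mul_integral {φ : ℝ → ℝ} {T A K : ℝ} (hK : 0 ≤ K)
    (hφ : ContinuousOn φ (Icc 0 T))
    (h : ∀ t ∈ Icc 0 T, φ t ≤ A + K * ∫ s in (0:ℝ)..t, φ s) :
    ∀ t ∈ Icc 0 T, φ t ≤ A * exp (K * t) := by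
  intro t ht
  have hT : 0 ≤ T := ht.1.trans ht.2
  set φe : ℝ → ℝ := fun s => φ (projIcc 0 T hT s)
  have hφe : Continuous φe :=
    hφ.comp_continuous (continuous_subtype_val.comp continuous_projIcc) fun s =>
      (projIcc 0 T hT s).2
  have hφe_eq : ∀ s ∈ Icc 0 T, φe s = φ s := fun s hs => by simp [φe, projIcc_of_mem hT hs]
  have hψ_eq : ∀ t ∈ Icc 0 T, ∫ s in (0:ℝ)..t, φe s = ∫ s in (0:ℝ)..t, φ s := fun t ht =>
    integral_congr fun s hs => hφe_eq s (uIcc_subset_Icc (left_mem_Icc.2 hT) ht hs)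
  have hψ : ∀ t ∈ Icc 0 T, ∫ s in (0:ℝ)..t, φe s ≤ gronwallBound 0 K A (t - 0) :=
    le_gronwallBound_of_liminf_deriv_right_le (f' := φe)
      (fun x _ => (hφe.integral_hasStrictDerivAt 0 x).hasDerivAt.continuousAt.continuousWithinAt)
      (fun x _ _ hr => (hφe.integral_hasStrictDerivAt 0 x).hasDerivAt.hasDerivWithinAt
        |>.liminf_right_slope_le hr)
      (by simp)
      (fun x hx => by
        have hx' : x ∈ Icc 0 T := Ico_subset_Icc_self hx
        rw [hφe_eq x hx', hψ_eq x hx']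
        linarith [h x hx'])
  calc φ t ≤ A + K * ∫ s in (0:ℝ)..t, φ s := h t ht
    _ ≤ A + K * gronwallBound 0 K A t := by
        rw [← hψ_eq t ht]; gcongr; simpa using hψ t ht
    _ = A * exp (K * t) := add_mul_gronwallBound_zero K A t

theorem tendstoUniformlyOn_of_norm_sub_le {ι α X : Type*} [NormedAddCommGroup X]
    {f : ι → α → X} {g : α → X} {l : Filter ι} {s : Set α} {b : ι → ℝ}
    (hb : Tendsto b l (𝓝 0)) (h : ∀ i, ∀ x ∈ s, ‖f i x - g x‖ ≤ b i) :
    TendstoUniformlyOn f g l s :=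
  Metric.tendstoUniformlyOn_iff.2 fun ε hε => (hb.eventually (gt_mem_nhds hε)).mono
    fun i hi x hx => by rw [dist_comm, dist_eq_norm]; exact (h i x hx).trans_lt hi

section OperatorFamily

variable {α E F : Type*} [TopologicalSpace α] [NormedAddCommGroup E] [NormedSpace ℝ E]
  [NormedAddCommGroup F] [NormedSpace ℝ F] {S : α → E →L[ℝ] F} {K : Set α}

theorem IsCompact.exists_opNorm_le_of_continuousOn_apply [CompleteSpace E] (hK : IsCompact K)
    (hS : ∀ x, ContinuousOn (fun t => S t x) K) : ∃ M, ∀ t ∈ K, ‖S t‖ ≤ M := by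
  obtain ⟨M, hM⟩ := banach_steinhaus (g := fun t : K => S t) fun x =>
    (hK.exists_bound_of_continuousOn (hS x)).imp fun _ h t => h t t.2
  exact ⟨M, fun t ht => hM ⟨t, ht⟩⟩

theorem continuousOn_apply_of_opNorm_le {M : ℝ} (hS : ∀ x, ContinuousOn (fun t => S t x) K)
    (hM : ∀ t ∈ K, ‖S t‖ ≤ M) :
    ContinuousOn (fun p : α × E => S p.1 p.2) (K ×ˢ univ) := by
  rintro ⟨t₀, x₀⟩ ⟨ht₀, -⟩
  rw [ContinuousWithinAt, tendsto_iff_norm_sub_tendsto_zero]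
  have hfst : Tendsto Prod.fst (𝓝[K ×ˢ univ] (t₀, x₀)) (𝓝[K] t₀) :=
    continuousWithinAt_fst.tendsto_nhdsWithin fun _ hp => hp.1
  have hsnd : Tendsto (fun p : α × E => ‖p.2 - x₀‖) (𝓝[K ×ˢ univ] (t₀, x₀)) (𝓝 0) :=
    tendsto_iff_norm_sub_tendsto_zero.1 (continuous_snd.continuousWithinAt.tendsto)
  have hlim := (hsnd.const_mul M).add
    (tendsto_iff_norm_sub_tendsto_zero.1 ((hS x₀ t₀ ht₀).tendsto.comp hfst))
  rw [mul_zero, zero_add] at hlim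
  refine squeeze_zero' (Eventually.of_forall fun _ => norm_nonneg _) ?_ hlim
  filter_upwards [self_mem_nhdsWithin] with ⟨t, x⟩ hp
  have ht : t ∈ K := hp.1
  calc ‖S t x - S t₀ x₀‖ = ‖S t (x - x₀) + (S t x₀ - S t₀ x₀)‖ := by
        rw [map_sub]; abel_nf
    _ ≤ ‖S t‖ * ‖x - x₀‖ + ‖S t x₀ - S t₀ x₀‖ :=
        (norm_add_le _ _).trans (by gcongr; exact (S t).le_opNorm _)
    _ ≤ M * ‖x - x₀‖ + ‖S t x₀ - S t₀ x₀‖ := by gcongr; exact hM t ht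

end OperatorFamily

theorem totallyBounded_of_forall_exists_isCompact_dist_lt {X : Type*} [PseudoMetricSpace X]
    {s : Set X} (h : ∀ ε > 0, ∃ K, IsCompact K ∧ ∀ y ∈ s, ∃ z ∈ K, dist y z < ε) :
    TotallyBounded s := by
  refine Metric.totallyBounded_iff.2 fun ε hε => ?_
  obtain ⟨K, hK, hsK⟩ := h (ε / 2) (half_pos hε)
  obtain ⟨t, ht, hKt⟩ := Metric.totallyBounded_iff.1 hK.totallyBounded (ε / 2) (half_pos hε)
  refine ⟨t, ht, fun y hy => ?_⟩
  obtain ⟨z, hz, hyz⟩ := hsK y hy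
  obtain ⟨c, hc, hzc⟩ := mem_iUnion₂.1 (hKt hz)
  exact mem_iUnion₂.2 ⟨c, hc, Metric.mem_ball.2 <| by
    linarith [dist_triangle y z c, Metric.mem_ball.1 hzc]⟩

theorem IsCompact.exists_tendsto_zero_forall_norm_sub_le {ι Λ α X : Type*} [TopologicalSpace Λ]
    [TopologicalSpace α] [NormedAddCommGroup X] {f : Λ → α → X} {K : Set α} (hK : IsCompact K)
    (hf : ContinuousOn (Function.uncurry f) (univ ×ˢ K)) {l : Filter ι} {p : ι → Λ} {p₀ : Λ}
    (hp : Tendsto p l (𝓝 p₀)) :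
    ∃ e : ι → ℝ, Tendsto e l (𝓝 0) ∧ ∀ i, ∀ a ∈ K, ‖f (p i) a - f p₀ a‖ ≤ e i := by
  have := isCompact_iff_compactSpace.1 hK
  let f' : C(Λ × K, X) := ⟨fun p => f p.1 p.2, hf.comp_continuous
    (continuous_fst.prodMk (continuous_subtype_val.comp continuous_snd)) fun p => ⟨trivial, p.2.2⟩⟩
  refine ⟨fun i => ‖f'.curry (p i) - f'.curry p₀‖,
    tendsto_iff_norm_sub_tendsto_zero.1 ((f'.curry.continuous.tendsto p₀).comp hp),
    fun i a ha => ?_⟩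
  exact (f'.curry (p i) - f'.curry p₀).norm_coe_le_norm ⟨a, ha⟩

theorem IsCompact.exists_norm_sub_le_mul_of_forall_nhds {β E F : Type*} [TopologicalSpace β]
    [CompactSpace β] [NormedAddCommGroup E] [NormedAddCommGroup F] {K : Set E} (hK : IsCompact K)
    {G : β → E → F} (hGc : ∀ x, Continuous fun b => G b x)
    (hG : ∀ x, ∃ W ∈ 𝓝 x, ∃ L : ℝ, 0 ≤ L ∧ ∀ y ∈ W, ∀ z ∈ W, ∀ b, ‖G b y - G b z‖ ≤ L * ‖y - z‖) :
    ∃ L : ℝ, 0 ≤ L ∧ ∀ y ∈ K, ∀ z ∈ K, ∀ b, ‖G b y - G b z‖ ≤ L * ‖y - z‖ := by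
  let Φ : E → C(β, F) := fun x => ⟨fun b => G b x, hGc x⟩
  have hΦ : LocallyLipschitzOn K Φ := fun x _ => by
    obtain ⟨W, hW, L, hL0, hL⟩ := hG x
    refine ⟨Real.toNNReal L, W, mem_nhdsWithin_of_mem_nhds hW,
      LipschitzOnWith.of_dist_le' fun y hy z hz => ?_⟩
    rw [dist_eq_norm, dist_eq_norm]
    exact (ContinuousMap.norm_le _ (by positivity)).2 fun b => hL y hy z hz b
  obtain ⟨L, hL⟩ := hΦ.exists_lipschitzOnWith_of_compact hK
  refine ⟨L, L.2, fun y hy z hz b => ?_⟩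
  rw [← dist_eq_norm, ← dist_eq_norm]
  exact (ContinuousMap.dist_apply_le_dist b).trans (hL.dist_le_mul y hy z hz)

section Convolution

variable {X : Type*} [NormedAddCommGroup X] [NormedSpace ℝ X] {S : ℝ → X →L[ℝ] X} {T M : ℝ}
  {g : ℝ → X} {a b t : ℝ}

theorem norm_integral_apply_sub_le (hM : ∀ τ ∈ Icc 0 T, ‖S τ‖ ≤ M) {β : ℝ → ℝ}
    (ha : 0 ≤ a) (hab : a ≤ b) (hbt : b ≤ t) (htT : t ≤ T)
    (hg : ∀ s ∈ Icc a b, ‖g s‖ ≤ β s) (hβ : IntervalIntegrable β volume a b) :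
    ‖∫ s in a..b, S (t - s) (g s)‖ ≤ M * ∫ s in a..b, β s := by
  rw [← intervalIntegral.integral_const_mul]
  refine norm_integral_le_of_norm_le hab (Eventually.of_forall fun s hs => ?_) (hβ.const_mul M)
  have hts : t - s ∈ Icc 0 T := ⟨by linarith [hs.2], by linarith [hs.1]⟩
  calc ‖S (t - s) (g s)‖ ≤ ‖S (t - s)‖ * ‖g s‖ := (S (t - s)).le_opNorm _
    _ ≤ M * β s := mul_le_mul (hM _ hts) (hg s (Ioc_subset_Icc_self hs)) (norm_nonneg _)
        ((norm_nonneg _).trans (hM _ hts))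

theorem norm_integral_apply_sub_le_const (hM : ∀ τ ∈ Icc 0 T, ‖S τ‖ ≤ M) {B : ℝ}
    (ha : 0 ≤ a) (hab : a ≤ b) (hbt : b ≤ t) (htT : t ≤ T) (hg : ∀ s ∈ Icc a b, ‖g s‖ ≤ B) :
    ‖∫ s in a..b, S (t - s) (g s)‖ ≤ M * B * (b - a) := by
  simpa [mul_comm, mul_left_comm, mul_assoc] using
    norm_integral_apply_sub_le hM ha hab hbt htT hg intervalIntegrable_const

theorem continuousOn_apply_sub (hS : ContinuousOn (fun p : ℝ × X => S p.1 p.2) (Icc 0 T ×ˢ univ))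
    (hg : ContinuousOn g (Icc 0 T)) (htT : t ≤ T) :
    ContinuousOn (fun s => S (t - s) (g s)) (Icc 0 t) :=
  hS.comp ((continuousOn_const.sub continuousOn_id).prodMk (hg.mono (Icc_subset_Icc_right htT)))
    fun s hs => ⟨⟨sub_nonneg.2 hs.2, by simp only [Pi.sub_apply, id]; linarith [hs.1]⟩, trivial⟩

theorem intervalIntegrable_apply_sub
    (hS : ContinuousOn (fun p : ℝ × X => S p.1 p.2) (Icc 0 T ×ˢ univ))
    (hg : ContinuousOn g (Icc 0 T)) (htT : t ≤ T) (ha : a ∈ Icc 0 t) (hb : b ∈ Icc 0 t) :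
    IntervalIntegrable (fun s => S (t - s) (g s)) volume a b :=
  ((continuousOn_apply_sub hS hg htT).mono (uIcc_subset_Icc ha hb)).intervalIntegrable

theorem exists_norm_integral_apply_sub_sub_le [CompleteSpace X]
    (hSadd : ∀ t s : ℝ, 0 ≤ t → 0 ≤ s → S (t + s) = (S t).comp (S s))
    (hM : ∀ τ ∈ Icc 0 T, ‖S τ‖ ≤ M)
    (hS : ContinuousOn (fun p : ℝ × X => S p.1 p.2) (Icc 0 T ×ˢ univ))
    (hg : ContinuousOn g (Icc 0 T)) {B h : ℝ} (hgB : ∀ s ∈ Icc 0 T, ‖g s‖ ≤ B) (hh : 0 < h)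
    (ht : t ∈ Icc 0 T) :
    ∃ y ∈ Metric.closedBall (0 : X) (M * B * T),
      ‖(∫ s in (0:ℝ)..t, S (t - s) (g s)) - S h y‖ ≤ M * B * h := by
  have hM0 : 0 ≤ M := (norm_nonneg _).trans (hM t ht)
  have hB0 : 0 ≤ B := (norm_nonneg _).trans (hgB t ht)
  have hgB' : ∀ {a b}, 0 ≤ a → b ≤ t → ∀ s ∈ Icc a b, ‖g s‖ ≤ B := fun ha hb s hs =>
    hgB s ⟨ha.trans hs.1, hs.2.trans (hb.trans ht.2)⟩
  rcases le_or_gt t h with hth | hth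
  · refine ⟨0, Metric.mem_closedBall_self (mul_nonneg (mul_nonneg hM0 hB0) (ht.1.trans ht.2)), ?_⟩
    rw [map_zero, sub_zero]
    calc _ ≤ M * B * (t - 0) := norm_integral_apply_sub_le_const hM le_rfl ht.1 le_rfl ht.2
          (hgB' le_rfl le_rfl)
      _ ≤ M * B * h := by gcongr; linarith
  · have hth' : 0 ≤ t - h := by linarith
    set y := ∫ s in (0:ℝ)..(t - h), S (t - h - s) (g s)
    refine ⟨y, mem_closedBall_zero_iff.2 ?_, ?_⟩
    · calc ‖y‖ ≤ M * B * (t - h - 0) := norm_integral_apply_sub_le_const hM le_rfl hth' le_rfl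
            (by linarith [ht.2]) (hgB' le_rfl (by linarith))
        _ ≤ M * B * T := by gcongr; linarith [ht.2]
    have hfactor : ∫ s in (0:ℝ)..(t - h), S (t - s) (g s) = S h y := by
      rw [← ContinuousLinearMap.intervalIntegral_comp_comm _ (intervalIntegrable_apply_sub hS hg
        (by linarith [ht.2]) ⟨le_rfl, hth'⟩ ⟨hth', le_rfl⟩)]
      refine integral_congr fun s hs => ?_
      rw [uIcc_of_le hth'] at hs
      rw [← ContinuousLinearMap.comp_apply, ← hSadd h _ hh.le (by linarith [hs.2])]
      ring_nf
    rw [← integral_add_adjacent_intervals (b := t - h)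
      (intervalIntegrable_apply_sub hS hg ht.2 ⟨le_rfl, ht.1⟩ ⟨hth', by linarith⟩)
      (intervalIntegrable_apply_sub hS hg ht.2 ⟨hth', by linarith⟩ ⟨ht.1, le_rfl⟩),
      hfactor, add_sub_cancel_left]
    calc _ ≤ M * B * (t - (t - h)) := norm_integral_apply_sub_le_const hM hth' (by linarith)
          le_rfl ht.2 (hgB' hth' le_rfl)
      _ = M * B * h := by ring

end Convolution

section MildSolution

variable {X : Type*} [NormedAddCommGroup X] [NormedSpace ℝ X] [CompleteSpace X]
  {S : ℝ → X →L[ℝ] X} {T M : ℝ}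

theorem isMildSol_zero : IsMildSol S (fun _ _ => 0) 0 :=
  ⟨continuousOn_const, fun t _ => by simp⟩

theorem IsMildSol.norm_sub_le (hM : ∀ τ ∈ Icc 0 T, ‖S τ‖ ≤ M)
    (hS : ContinuousOn (fun p : ℝ × X => S p.1 p.2) (Icc 0 T ×ˢ univ))
    {G₁ G₂ : ℝ → X → X} {w₁ w₂ : ℝ → X} (hw₁ : IsMildSol S G₁ w₁) (hw₂ : IsMildSol S G₂ w₂)
    (hG₁ : ContinuousOn (fun s => G₁ s (w₁ s)) (Icc 0 T))
    (hG₂ : ContinuousOn (fun s => G₂ s (w₂ s)) (Icc 0 T)) {ε L : ℝ} (hε : 0 ≤ ε) (hL : 0 ≤ L)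
    (hG : ∀ s ∈ Icc 0 T, ‖G₁ s (w₁ s) - G₂ s (w₂ s)‖ ≤ ε + L * ‖w₁ s - w₂ s‖) :
    ∀ t ∈ Icc 0 T, ‖w₁ t - w₂ t‖ ≤ (M * ‖w₁ 0 - w₂ 0‖ + M * ε * T) * exp (M * L * t) := by
  intro t ht
  have hM0 : 0 ≤ M := (norm_nonneg _).trans (hM t ht)
  have hφ : ContinuousOn (fun s => ‖w₁ s - w₂ s‖) (Icc 0 T) :=
    ((hw₁.1.sub hw₂.1).mono Icc_subset_Ici_self).norm
  refine le_mul_exp_of_le_add_mul_integral (by positivity) hφ (fun t ht => ?_) t ht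
  have hsub : Icc 0 t ⊆ Icc 0 T := Icc_subset_Icc_right ht.2
  have hφt : IntervalIntegrable (fun s => ‖w₁ s - w₂ s‖) volume 0 t :=
    (hφ.mono ((uIcc_of_le ht.1).trans_subset hsub)).intervalIntegrable
  have hdiff : w₁ t - w₂ t = S t (w₁ 0 - w₂ 0) +
      ∫ s in (0:ℝ)..t, S (t - s) (G₁ s (w₁ s) - G₂ s (w₂ s)) := by
    rw [hw₁.2 t ht.1, hw₂.2 t ht.1, map_sub]
    simp only [map_sub]
    rw [integral_sub (intervalIntegrable_apply_sub hS hG₁ ht.2 ⟨le_rfl, ht.1⟩ ⟨ht.1, le_rfl⟩)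
      (intervalIntegrable_apply_sub hS hG₂ ht.2 ⟨le_rfl, ht.1⟩ ⟨ht.1, le_rfl⟩)]
    abel
  calc ‖w₁ t - w₂ t‖
      ≤ ‖S t‖ * ‖w₁ 0 - w₂ 0‖ + M * ∫ s in (0:ℝ)..t, (ε + L * ‖w₁ s - w₂ s‖) := by
        rw [hdiff]
        exact norm_add_le_of_le ((S t).le_opNorm _) (norm_integral_apply_sub_le hM le_rfl ht.1
          le_rfl ht.2 (fun s hs => hG s (hsub hs)) (intervalIntegrable_const.add (hφt.const_mul L)))
    _ = ‖S t‖ * ‖w₁ 0 - w₂ 0‖ + M * ε * t + M * L * ∫ s in (0:ℝ)..t, ‖w₁ s - w₂ s‖ := by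
        rw [intervalIntegral.integral_add intervalIntegrable_const (hφt.const_mul L),
          intervalIntegral.integral_const_mul, intervalIntegral.integral_const, smul_eq_mul]
        ring
    _ ≤ M * ‖w₁ 0 - w₂ 0‖ + M * ε * T + M * L * ∫ s in (0:ℝ)..t, ‖w₁ s - w₂ s‖ := by
        gcongr
        · exact hM t (hsub ⟨ht.1, le_rfl⟩)
        · exact ht.2

theorem IsMildSol.norm_le (hM : ∀ τ ∈ Icc 0 T, ‖S τ‖ ≤ M)
    (hS : ContinuousOn (fun p : ℝ × X => S p.1 p.2) (Icc 0 T ×ˢ univ))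
    {G : ℝ → X → X} {w : ℝ → X} (hw : IsMildSol S G w)
    (hGc : ContinuousOn (fun s => G s (w s)) (Icc 0 T)) {a : ℝ} (ha : 0 ≤ a)
    (hG : ∀ s ∈ Icc 0 T, ‖G s (w s)‖ ≤ a * (1 + ‖w s‖)) :
    ∀ t ∈ Icc 0 T, ‖w t‖ ≤ (M * ‖w 0‖ + M * a * T) * exp (M * a * t) := by
  simpa using hw.norm_sub_le hM hS isMildSol_zero hGc continuousOn_const ha ha
    fun s hs => by simpa [mul_add] using hG s hs

variable {ι : Type*} {G : ι → ℝ → X → X} {w : ι → ℝ → X} {C : Set X}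

theorem totallyBounded_iUnion_image_of_norm_le
    (hSadd : ∀ t s : ℝ, 0 ≤ t → 0 ≤ s → S (t + s) = (S t).comp (S s))
    (hScomp : ∀ t : ℝ, 0 < t → ∀ B : Set X, IsBounded B → IsCompact (closure (S t '' B)))
    (hM : ∀ τ ∈ Icc 0 T, ‖S τ‖ ≤ M)
    (hS : ContinuousOn (fun p : ℝ × X => S p.1 p.2) (Icc 0 T ×ˢ univ))
    (hw : ∀ i, IsMildSol S (G i) (w i))
    (hC : IsCompact C) (hw0 : ∀ i, w i 0 ∈ C)
    (hGc : ∀ i, ContinuousOn (fun s => G i s (w i s)) (Icc 0 T)) {B : ℝ}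
    (hGB : ∀ i, ∀ s ∈ Icc 0 T, ‖G i s (w i s)‖ ≤ B) :
    TotallyBounded (⋃ i, w i '' Icc 0 T) := by
  refine totallyBounded_of_forall_exists_isCompact_dist_lt fun ε hε => ?_
  obtain ⟨h, hh, hhε⟩ := exists_pos_mul_lt hε (M * B)
  refine ⟨(fun p : ℝ × X => S p.1 p.2) '' (Icc 0 T ×ˢ C) +
      closure (S h '' Metric.closedBall 0 (M * B * T)),
    ((isCompact_Icc.prod hC).image_of_continuousOn (hS.mono (prod_mono_right (subset_univ _)))).add
      (hScomp h hh _ Metric.isBounded_closedBall), ?_⟩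
  simp only [mem_iUnion, mem_image]
  rintro _ ⟨i, t, ht, rfl⟩
  obtain ⟨y, hy, hyh⟩ := exists_norm_integral_apply_sub_sub_le hSadd hM hS (hGc i) (hGB i) hh ht
  refine ⟨S t (w i 0) + S h y,
    add_mem_add ⟨(t, w i 0), ⟨ht, hw0 i⟩, rfl⟩ (subset_closure ⟨y, hy, rfl⟩), ?_⟩
  rw [dist_eq_norm, (hw i).2 t ht.1, add_sub_add_left_eq_sub]
  exact hyh.trans_lt hhε

theorem isCompact_closure_iUnion_image_of_linear_growth
    (hSadd : ∀ t s : ℝ, 0 ≤ t → 0 ≤ s → S (t + s) = (S t).comp (S s))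
    (hScomp : ∀ t : ℝ, 0 < t → ∀ B : Set X, IsBounded B → IsCompact (closure (S t '' B)))
    (hM : ∀ τ ∈ Icc 0 T, ‖S τ‖ ≤ M)
    (hS : ContinuousOn (fun p : ℝ × X => S p.1 p.2) (Icc 0 T ×ˢ univ))
    (hw : ∀ i, IsMildSol S (G i) (w i))
    (hC : IsCompact C) (hw0 : ∀ i, w i 0 ∈ C)
    (hGc : ∀ i, ContinuousOn (fun s => G i s (w i s)) (Icc 0 T)) {a : ℝ} (ha : 0 ≤ a)
    (hGa : ∀ i, ∀ s ∈ Icc 0 T, ∀ y, ‖G i s y‖ ≤ a * (1 + ‖y‖)) :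
    IsCompact (closure (⋃ i, w i '' Icc 0 T)) := by
  obtain ⟨ρ, hρ⟩ := isBounded_iff_forall_norm_le.1 hC.isBounded
  have hR : ∀ i, ∀ s ∈ Icc 0 T, ‖w i s‖ ≤ (M * ρ + M * a * T) * exp (M * a * T) :=
    fun i s hs => by
    have hM0 : 0 ≤ M := (norm_nonneg _).trans (hM s hs)
    calc ‖w i s‖ ≤ (M * ‖w i 0‖ + M * a * T) * exp (M * a * s) :=
          (hw i).norm_le hM hS (hGc i) ha (fun s hs => hGa i s hs _) s hs
      _ ≤ (M * ρ + M * a * T) * exp (M * a * T) := by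
        have hρi := hρ _ (hw0 i)
        gcongr
        · have hT : 0 ≤ T := hs.1.trans hs.2
          have hρ0 : 0 ≤ ρ := (norm_nonneg _).trans hρi
          positivity
        exact hs.2
  refine (totallyBounded_iUnion_image_of_norm_le hSadd hScomp hM hS hw hC hw0 hGc
    (B := a * (1 + (M * ρ + M * a * T) * exp (M * a * T)))
    fun i s hs => (hGa i s hs _).trans ?_).closure.isCompact_of_isClosed isClosed_closure
  gcongr
  exact hR i s hs

theorem tendstoUniformlyOn_of_isMildSol (hM : ∀ τ ∈ Icc 0 T, ‖S τ‖ ≤ M)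
    (hS : ContinuousOn (fun p : ℝ × X => S p.1 p.2) (Icc 0 T ×ˢ univ))
    {l : Filter ι} {G₀ : ℝ → X → X} {w₀ : ℝ → X} (hw : ∀ i, IsMildSol S (G i) (w i))
    (hw₀ : IsMildSol S G₀ w₀) (hGc : ∀ i, ContinuousOn (fun s => G i s (w i s)) (Icc 0 T))
    (hG₀c : ContinuousOn (fun s => G₀ s (w₀ s)) (Icc 0 T))
    (h0 : Tendsto (fun i => w i 0) l (𝓝 (w₀ 0))) {Q : Set X}
    (hwQ : ∀ i, ∀ s ∈ Icc 0 T, w i s ∈ Q) {e : ι → ℝ} (he : Tendsto e l (𝓝 0))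
    (hGe : ∀ i, ∀ s ∈ Icc 0 T, ∀ y ∈ Q, ‖G i s y - G₀ s y‖ ≤ e i) {L : ℝ} (hL0 : 0 ≤ L)
    (hL : ∀ i, ∀ s ∈ Icc 0 T, ‖G₀ s (w i s) - G₀ s (w₀ s)‖ ≤ L * ‖w i s - w₀ s‖) :
    TendstoUniformlyOn w w₀ l (Icc 0 T) := by
  refine tendstoUniformlyOn_of_norm_sub_le
    (b := fun i => (M * ‖w i 0 - w₀ 0‖ + M * e i * T) * exp (M * L * T)) ?_ fun i t ht => ?_
  · simpa using (((tendsto_iff_norm_sub_tendsto_zero.1 h0).const_mul M).add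
      ((he.const_mul M).mul_const T)).mul_const (exp (M * L * T))
  have hM0 : 0 ≤ M := (norm_nonneg _).trans (hM t ht)
  have h0T : (0 : ℝ) ∈ Icc 0 T := ⟨le_rfl, ht.1.trans ht.2⟩
  have he0 : 0 ≤ e i := (norm_nonneg _).trans (hGe i 0 h0T _ (hwQ i 0 h0T))
  calc ‖w i t - w₀ t‖ ≤ (M * ‖w i 0 - w₀ 0‖ + M * e i * T) * exp (M * L * t) :=
        (hw i).norm_sub_le hM hS hw₀ (hGc i) hG₀c he0 hL0
          (fun s hs => (norm_sub_le_norm_sub_add_norm_sub _ (G₀ s (w i s)) _).trans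
            (add_le_add (hGe i s hs _ (hwQ i s hs)) (hL i s hs))) t ht
    _ ≤ (M * ‖w i 0 - w₀ 0‖ + M * e i * T) * exp (M * L * T) := by
        have hT : 0 ≤ T := h0T.2
        gcongr
        exact ht.2

end MildSolution

theorem statement6_general
    {X : Type*} [NormedAddCommGroup X] [NormedSpace ℝ X] [CompleteSpace X]
    {Λ : Type*} [MetricSpace Λ]
    (S : ℝ → X →L[ℝ] X)
    (hSadd : ∀ t s : ℝ, 0 ≤ t → 0 ≤ s → S (t + s) = (S t).comp (S s))
    (hScont : ∀ x : X, ContinuousOn (fun t => S t x) (Set.Ici (0:ℝ)))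
    (hScomp : ∀ t : ℝ, 0 < t → ∀ B : Set X, Bornology.IsBounded B →
      IsCompact (closure (S t '' B)))
    (F : Λ → ℝ → X → X)
    (hFcont : ContinuousOn (fun p : Λ × ℝ × X => F p.1 p.2.1 p.2.2)
      {p : Λ × ℝ × X | 0 ≤ p.2.1})
    (hF1 : ∀ (l : Λ) (x₀ : X), ∃ W ∈ nhds x₀, ∃ L : ℝ, 0 < L ∧
      ∀ x ∈ W, ∀ y ∈ W, ∀ t : ℝ, 0 ≤ t → ‖F l t x - F l t y‖ ≤ L * ‖x - y‖)
    (c : ℝ → ℝ) (hc : Continuous c)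
    (hF2 : ∀ (l : Λ) (t : ℝ) (x : X), 0 ≤ t → ‖F l t x‖ ≤ c t * (1 + ‖x‖))
    (l : ℕ → Λ) (l₀ : Λ) (hl : Filter.Tendsto l Filter.atTop (nhds l₀))
    (x : ℕ → X) (x₀ : X) (hx : Filter.Tendsto x Filter.atTop (nhds x₀))
    (u : ℕ → ℝ → X)
    (hu : ∀ n : ℕ, IsMildSol S (F (l n)) (u n) ∧ u n 0 = x n)
    (u₀ : ℝ → X)
    (hu₀ : IsMildSol S (F l₀) u₀ ∧ u₀ 0 = x₀) :
    ∀ t₀ : ℝ, 0 < t₀ →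
      TendstoUniformlyOn (fun n t => u n t) u₀ Filter.atTop (Set.Icc (0:ℝ) t₀) := by
  intro t₀ ht₀
  have hSc : ∀ y, ContinuousOn (fun t => S t y) (Icc 0 t₀) :=
    fun y => (hScont y).mono Icc_subset_Ici_self
  obtain ⟨M, hM⟩ := isCompact_Icc.exists_opNorm_le_of_continuousOn_apply hSc
  have hS := continuousOn_apply_of_opNorm_le hSc hM
  have hFw : ∀ p w, IsMildSol S (F p) w → ContinuousOn (fun s => F p s (w s)) (Icc 0 t₀) :=
    fun p w hw => hFcont.comp (continuousOn_const.prodMk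
      (continuousOn_id.prodMk (hw.1.mono Icc_subset_Ici_self))) fun s hs => hs.1
  obtain ⟨a, ha⟩ := isCompact_Icc.exists_bound_of_continuousOn (hc.continuousOn (s := Icc 0 t₀))
  set Q := closure (⋃ n, u n '' Icc 0 t₀) ∪ u₀ '' Icc 0 t₀
  have huQ : ∀ n, ∀ s ∈ Icc 0 t₀, u n s ∈ Q :=
    fun n s hs => Or.inl (subset_closure (mem_iUnion.2 ⟨n, s, hs, rfl⟩))
  have hu₀Q : ∀ s ∈ Icc 0 t₀, u₀ s ∈ Q := fun s hs => Or.inr ⟨s, hs, rfl⟩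
  have hQ : IsCompact Q :=
    (isCompact_closure_iUnion_image_of_linear_growth hSadd hScomp hM hS (fun n => (hu n).1)
      hx.isCompact_insert_range (fun n => (hu n).2 ▸ mem_insert_of_mem _ (mem_range_self n))
      (fun n => hFw _ _ (hu n).1) ((norm_nonneg _).trans (ha 0 ⟨le_rfl, ht₀.le⟩)) fun _ s hs y =>
        (hF2 _ s y hs.1).trans (by gcongr; exact (le_abs_self _).trans (ha s hs))).union
    (isCompact_Icc.image_of_continuousOn (hu₀.1.1.mono Icc_subset_Ici_self))
  obtain ⟨L, hL0, hL⟩ := hQ.exists_norm_sub_le_mul_of_forall_nhds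
    (G := fun (b : Icc (0:ℝ) t₀) y => F l₀ b y)
    (fun y => hFcont.comp_continuous (continuous_const.prodMk
      (continuous_subtype_val.prodMk continuous_const)) fun b => b.2.1)
    (fun y => by
      obtain ⟨W, hW, L, hL, hLip⟩ := hF1 l₀ y
      exact ⟨W, hW, L, hL.le, fun y hy z hz b => hLip y hy z hz b b.2.1⟩)
  obtain ⟨e, he, hFe⟩ := (isCompact_Icc.prod hQ).exists_tendsto_zero_forall_norm_sub_le
    (f := fun p (q : ℝ × X) => F p q.1 q.2) (hFcont.mono fun p hp => hp.2.1.1) hl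
  exact tendstoUniformlyOn_of_isMildSol hM hS (fun n => (hu n).1) hu₀.1 (fun n => hFw _ _ (hu n).1)
    (hFw _ _ hu₀.1) (by simpa only [(hu _).2, hu₀.2] using hx) huQ he
    (fun n s hs y hy => hFe n (s, y) ⟨hs, hy⟩) hL0
    fun n s hs => hL _ (huQ n s hs) _ (hu₀Q s hs) ⟨s, hs⟩

/-- continuous dependence: if `λₙ → λ₀`, `xₙ → x₀`, `uₙ` are mild
solutions for `(λₙ, xₙ)` and `u₀` is the unique mild solution for `(λ₀, x₀)`,
then `uₙ → u₀` uniformly on bounded intervals. -/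
theorem statement6
    {X : Type*} [NormedAddCommGroup X] [NormedSpace ℝ X] [CompleteSpace X]
    {Λ : Type*} [MetricSpace Λ]
    (S : ℝ → X →L[ℝ] X)
    (hS0 : S 0 = 1)
    (hSadd : ∀ t s : ℝ, 0 ≤ t → 0 ≤ s → S (t + s) = (S t).comp (S s))
    (hScont : ∀ x : X, ContinuousOn (fun t => S t x) (Set.Ici (0:ℝ)))
    (hScomp : ∀ t : ℝ, 0 < t → ∀ B : Set X, Bornology.IsBounded B →
      IsCompact (closure (S t '' B)))
    (F : Λ → ℝ → X → X)
    (hFcont : ContinuousOn (fun p : Λ × ℝ × X => F p.1 p.2.1 p.2.2)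
      {p : Λ × ℝ × X | 0 ≤ p.2.1})
    (hF1 : ∀ (l : Λ) (x₀ : X), ∃ W ∈ nhds x₀, ∃ L : ℝ, 0 < L ∧
      ∀ x ∈ W, ∀ y ∈ W, ∀ t : ℝ, 0 ≤ t → ‖F l t x - F l t y‖ ≤ L * ‖x - y‖)
    (c : ℝ → ℝ) (hc : Continuous c) (hc0 : ∀ t : ℝ, 0 ≤ t → 0 ≤ c t)
    (hF2 : ∀ (l : Λ) (t : ℝ) (x : X), 0 ≤ t → ‖F l t x‖ ≤ c t * (1 + ‖x‖))
    (l : ℕ → Λ) (l₀ : Λ) (hl : Filter.Tendsto l Filter.atTop (nhds l₀))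
    (x : ℕ → X) (x₀ : X) (hx : Filter.Tendsto x Filter.atTop (nhds x₀))
    (u : ℕ → ℝ → X)
    (hu : ∀ n : ℕ, IsMildSol S (F (l n)) (u n) ∧ u n 0 = x n)
    (u₀ : ℝ → X)
    (hu₀ : IsMildSol S (F l₀) u₀ ∧ u₀ 0 = x₀)
    (huniq : ∀ v : ℝ → X, IsMildSol S (F l₀) v → v 0 = x₀ →
      ∀ t : ℝ, 0 ≤ t → v t = u₀ t) :
    ∀ t₀ : ℝ, 0 < t₀ →
      TendstoUniformlyOn (fun n t => u n t) u₀ Filter.atTop (Set.Icc (0:ℝ) t₀) :=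
  statement6_general S hSadd hScont hScomp F hFcont hF1 c hc hF2 l l₀ hl x x₀ hx u hu u₀ hu₀
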